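/- arXiv:2410.23495 — 3 statements merged into one kernel-verified Lean document; each statement's English description precedes it below -/
import Mathlib

section
/- For every J > γ/(δ·n), where G is the learned set at the end of the first experiment and δ = max over v ∈ S ∖ G of h(v; G) > 0, cold-starting at experiment J learns strictly more features than in the first experiment: L_cold^(1) ⊊ L_cold^(J). -/
/-!
On `T_{1:j}` the frequency `g(v; T_{1:j}, N)` of a feature among the points that are not yet
well classified equals `h(v; L)`, independently of `j`, while the learning threshold
`γ / |T_{1:j}| = γ / (j n)` decreases with `j`. For `v ∈ S_c` the score `h(v; L)` only depends on
`L ∩ S_c` and is injective on `S_c`, so inside each class every run learns a prefix of one and the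
same greedy chain, stopping at its first element scoring below the threshold; a lower threshold
therefore learns a longer prefix, and `L^(1) ⊆ L^(J)`. If equality held, the feature attaining
`δ` would still be unlearned at experiment `J`, whence `δ < γ / (J n)`, i.e. `J < γ / (δ n)`.
-/

open Finset

/-- Number of data points in `N` whose feature set contains the feature `v`. -/
def featCount {F X : Type} [DecidableEq F] (feats : X → Finset F)
    (N : Finset X) (v : F) : ℕ :=
  (N.filter fun x => v ∈ feats x).card

/-- `g(v; T, N)`: the frequency of feature `v` among the data points of `N`,
normalized by the size of the full training set `T`. -/
noncomputable def gval {F X : Type} [DecidableEq F] (feats : X → Finset F)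
    (T N : Finset X) (v : F) : ℝ :=
  (featCount feats N v : ℝ) / (T.card : ℝ)

/-- The set of data points of `T` with nonzero gradient: not memorized (not in
`M`) and not well-classified by the learned set `L` (fewer than `τ` of their
features are learned). -/
def active {F X : Type} [DecidableEq F] [DecidableEq X] (feats : X → Finset F) (τ : ℕ)
    (L : Finset F) (M T : Finset X) : Finset X :=
  (T \ M).filter fun x => ((feats x) ∩ L).card < τ

/-- The learned set after the first `i` steps of a run `us` starting from `L0`. -/
def learnedAfter {F : Type} [DecidableEq F] (L0 : Finset F) (us : List F)
    (i : ℕ) : Finset F :=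
  L0 ∪ (us.take i).toFinset

/-- `us` is a valid greedy training run on the dataset `T` with initially
memorized set `M`, starting from the learned set `L0`; `S` is the set of all
features, `τ` the well-classification threshold and `γ` the noise strength.
At every step the model picks a not-yet-learned feature of maximal frequency
`g` among the active (nonzero-gradient) data points; it is learned if its
frequency is at least `γ/|T|`, and at the end of the run every remaining
unlearned feature has frequency below `γ/|T|` (the remaining active points are
then memorized). -/
structure IsRun {F X : Type} [DecidableEq F] [DecidableEq X] (S : Finset F)
    (feats : X → Finset F) (τ : ℕ) (γ : ℝ) (T M : Finset X)
    (L0 : Finset F) (us : List F) : Prop where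
  mem : ∀ i (h : i < us.length), us.get ⟨i, h⟩ ∈ S \ learnedAfter L0 us i
  maximal : ∀ i (h : i < us.length), ∀ u ∈ S \ learnedAfter L0 us i,
    gval feats T (active feats τ (learnedAfter L0 us i) M T) u ≤
      gval feats T (active feats τ (learnedAfter L0 us i) M T) (us.get ⟨i, h⟩)
  threshold : ∀ i (h : i < us.length),
    γ / (T.card : ℝ) ≤
      gval feats T (active feats τ (learnedAfter L0 us i) M T) (us.get ⟨i, h⟩)
  stopped : ∀ u ∈ S \ learnedAfter L0 us us.length,
    gval feats T (active feats τ (learnedAfter L0 us us.length) M T) u <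
      γ / (T.card : ℝ)

/-- The memorized set after a run: the previously memorized points together
with all points that are still active (not well-classified) at the end of the
run. -/
def finalM {F X : Type} [DecidableEq F] [DecidableEq X] (feats : X → Finset F) (τ : ℕ)
    (T M : Finset X) (L0 : Finset F) (us : List F) : Finset X :=
  M ∪ active feats τ (L0 ∪ us.toFinset) M T

/-- The cumulative dataset `T_{1:j}`, the union of the first `j` chunks. -/
def cumT {X : Type} [DecidableEq X] (chunk : ℕ → Finset X) (j : ℕ) : Finset X :=
  (Finset.Icc 1 j).biUnion chunk

/-- `h(v; L)`: the fraction of data points (of one chunk) containing `v` that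
are not well-classified by the learned set `L`. -/
noncomputable def hval {F : Type} [DecidableEq F] (C : ℕ) (Sc : Fin C → Finset F)
    (nA : Fin C → Finset F → ℕ) (τ n : ℕ) (v : F) (L : Finset F) : ℝ :=
  (1 / (n : ℝ)) * ∑ c : Fin C, ∑ A ∈ (Sc c).powerset,
    (nA c A : ℝ) * (if v ∈ A ∧ (A ∩ L).card < τ then 1 else 0)

/-- The test accuracy of a learned feature set `L`. -/
noncomputable def ACC {F : Type} [DecidableEq F] (C : ℕ) (Sc : Fin C → Finset F)
    (nA : Fin C → Finset F → ℕ) (τ n : ℕ) (L : Finset F) : ℝ :=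
  1 - ((C : ℝ) - 1) / (C : ℝ) * ((1 / (n : ℝ)) *
    ∑ c : Fin C, ∑ A ∈ (Sc c).powerset,
      (nA c A : ℝ) * (if (A ∩ L).card < τ then 1 else 0))

section Greedy

variable {F : Type} [DecidableEq F]

inductive IsGreedyPrefix (U : Finset F) (s : F → Finset F → ℝ) : Finset F → Prop
  | empty : IsGreedyPrefix U s ∅
  | step {Q : Finset F} {v : F} : IsGreedyPrefix U s Q → v ∈ U → v ∉ Q →
      (∀ u ∈ U, u ∉ Q → s u Q ≤ s v Q) → IsGreedyPrefix U s (insert v Q)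

namespace IsGreedyPrefix

variable {U : Finset F} {s : F → Finset F → ℝ} {Q Q' : Finset F}

theorem subset (h : IsGreedyPrefix U s Q) : Q ⊆ U := by
  induction h with
  | empty => exact empty_subset U
  | step _ hv _ _ ih => exact insert_subset hv ih

theorem eq_of_card_eq (hinj : ∀ Q ⊆ U, Set.InjOn (s · Q) U)
    (h : IsGreedyPrefix U s Q) (h' : IsGreedyPrefix U s Q') (hcard : #Q = #Q') : Q = Q' := by
  induction h generalizing Q' with
  | empty => exact (card_eq_zero.mp hcard.symm).symm
  | @step Q v hQ hv hvQ hmax ih =>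
    cases h' with
    | empty => simp at hcard
    | @step R w hR hw hwR hmax' =>
      rw [card_insert_of_notMem hvQ, card_insert_of_notMem hwR] at hcard
      obtain rfl : Q = R := ih hR (by omega)
      rw [hinj Q hQ.subset hv hw (le_antisymm (hmax' v hv hvQ) (hmax w hw hwR))]

/-- Injectivity makes every greedy choice unique, so the greedy prefixes form a chain. -/
theorem subset_of_card_le (hinj : ∀ Q ⊆ U, Set.InjOn (s · Q) U)
    (h : IsGreedyPrefix U s Q) (h' : IsGreedyPrefix U s Q') (hcard : #Q ≤ #Q') : Q ⊆ Q' := by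
  induction h' with
  | empty => simp_all
  | @step R w hR hw hwR hmax ih =>
    rw [card_insert_of_notMem hwR] at hcard
    rcases hcard.lt_or_eq with hlt | heq
    · exact (ih (by omega)).trans (subset_insert w R)
    · refine (h.eq_of_card_eq hinj (hR.step hw hwR hmax) ?_).le
      rw [heq, card_insert_of_notMem hwR]

end IsGreedyPrefix

end Greedy

theorem List.toFinset_take_succ {α : Type} [DecidableEq α] (l : List α) {i : ℕ}
    (hi : i < l.length) : (l.take (i + 1)).toFinset = insert l[i] (l.take i).toFinset := by
  ext a
  simp only [List.mem_toFinset, List.take_add_one, List.getElem?_eq_getElem hi,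
    Option.toList_some, List.mem_append, List.mem_singleton, mem_insert]
  exact or_comm

section Run

variable {F X : Type} [DecidableEq F] [DecidableEq X] {S U : Finset F}
  {feats : X → Finset F} {τ : ℕ} {γ : ℝ} {T : Finset X} {us : List F}
  {s : F → Finset F → ℝ}

namespace IsRun

theorem step (hrun : IsRun S feats τ γ T ∅ ∅ us)
    (hs : ∀ L v, gval feats T (active feats τ L ∅ T) v = s v L) {i : ℕ} (hi : i < us.length) :
    us[i] ∈ S ∧ us[i] ∉ (us.take i).toFinset ∧
      (∀ u ∈ S, u ∉ (us.take i).toFinset →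
        s u (us.take i).toFinset ≤ s us[i] (us.take i).toFinset) ∧
      γ / #T ≤ s us[i] (us.take i).toFinset := by
  have hL : learnedAfter ∅ us i = (us.take i).toFinset := empty_union _
  have hmem := hrun.mem i hi
  have hmax := hrun.maximal i hi
  have hthr := hrun.threshold i hi
  simp only [hL, hs, mem_sdiff, List.get_eq_getElem] at hmem hmax hthr
  exact ⟨hmem.1, hmem.2, fun u hu hu' => hmax u ⟨hu, hu'⟩, hthr⟩

theorem score_lt (hrun : IsRun S feats τ γ T ∅ ∅ us)
    (hs : ∀ L v, gval feats T (active feats τ L ∅ T) v = s v L) {v : F} (hvS : v ∈ S)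
    (hv : v ∉ us.toFinset) : s v us.toFinset < γ / #T := by
  have hL : learnedAfter ∅ us us.length = us.toFinset := by
    rw [learnedAfter, empty_union, List.take_length]
  have := hrun.stopped v (by rw [hL]; exact mem_sdiff.2 ⟨hvS, hv⟩)
  rwa [hL, hs] at this

theorem isGreedyPrefix_take_inter (hU : U ⊆ S) (hloc : ∀ v ∈ U, ∀ L, s v L = s v (L ∩ U))
    (hrun : IsRun S feats τ γ T ∅ ∅ us)
    (hs : ∀ L v, gval feats T (active feats τ L ∅ T) v = s v L) :
    ∀ i ≤ us.length, IsGreedyPrefix U s ((us.take i).toFinset ∩ U) := by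
  intro i
  induction i with
  | zero => simpa using IsGreedyPrefix.empty
  | succ i ih =>
    intro hi
    obtain ⟨-, hvi, hmax, -⟩ := hrun.step hs hi
    rw [List.toFinset_take_succ us hi]
    by_cases hvU : us[i] ∈ U
    · rw [insert_inter_of_mem hvU]
      refine (ih (by omega)).step hvU (fun h => hvi (mem_inter.1 h).1) fun u hu huQ => ?_
      have := hmax u (hU hu) fun h => huQ (mem_inter.2 ⟨h, hu⟩)
      rwa [hloc u hu, hloc _ hvU] at this
    · rw [insert_inter_of_notMem hvU]
      exact ih (by omega)

theorem exists_threshold_le_of_card_lt (hU : U ⊆ S)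
    (hloc : ∀ v ∈ U, ∀ L, s v L = s v (L ∩ U)) (hinj : ∀ Q ⊆ U, Set.InjOn (s · Q) U)
    (hrun : IsRun S feats τ γ T ∅ ∅ us)
    (hs : ∀ L v, gval feats T (active feats τ L ∅ T) v = s v L) :
    ∀ i ≤ us.length, ∀ Q, IsGreedyPrefix U s Q → #Q < #((us.take i).toFinset ∩ U) →
      ∃ w ∈ U, w ∉ Q ∧ γ / #T ≤ s w Q := by
  intro i
  induction i with
  | zero => simp
  | succ i ih =>
    intro hi Q hQ hlt
    set P := (us.take i).toFinset ∩ U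
    by_cases hQP : #Q < #P
    · exact ih (by omega) Q hQ hQP
    obtain ⟨-, hvi, -, hthr⟩ := hrun.step hs hi
    have hvP : us[i] ∉ P := fun h => hvi (mem_inter.1 h).1
    rw [List.toFinset_take_succ us hi] at hlt
    by_cases hvU : us[i] ∈ U
    · rw [insert_inter_of_mem hvU, card_insert_of_notMem hvP] at hlt
      have hPQ : P = Q := (hrun.isGreedyPrefix_take_inter hU hloc hs i (by omega)).eq_of_card_eq
        hinj hQ (by omega)
      refine ⟨us[i], hvU, hPQ ▸ hvP, ?_⟩
      rw [hloc _ hvU] at hthr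
      rwa [← hPQ]
    · rw [insert_inter_of_notMem hvU] at hlt
      exact absurd hlt hQP

theorem toFinset_subset {M : Finset X} {L0 : Finset F} (hrun : IsRun S feats τ γ T M L0 us) :
    us.toFinset ⊆ S := by
  intro v hv
  obtain ⟨i, hi, rfl⟩ := List.mem_iff_getElem.1 (List.mem_toFinset.1 hv)
  exact (mem_sdiff.1 (hrun.mem i hi)).1

/-- Both runs follow the same greedy chain in `U`, and the one with the lower threshold cannot
stop before the other. -/
theorem toFinset_inter_subset {T₁ T₂ : Finset X} {us₁ us₂ : List F} (hU : U ⊆ S)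
    (hloc : ∀ v ∈ U, ∀ L, s v L = s v (L ∩ U)) (hinj : ∀ Q ⊆ U, Set.InjOn (s · Q) U)
    (hrun₁ : IsRun S feats τ γ T₁ ∅ ∅ us₁)
    (hs₁ : ∀ L v, gval feats T₁ (active feats τ L ∅ T₁) v = s v L)
    (hrun₂ : IsRun S feats τ γ T₂ ∅ ∅ us₂)
    (hs₂ : ∀ L v, gval feats T₂ (active feats τ L ∅ T₂) v = s v L)
    (hT : γ / #T₂ ≤ γ / #T₁) : us₁.toFinset ∩ U ⊆ us₂.toFinset ∩ U := by
  have hP₁ := hrun₁.isGreedyPrefix_take_inter hU hloc hs₁ _ le_rfl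
  have hP₂ := hrun₂.isGreedyPrefix_take_inter hU hloc hs₂ _ le_rfl
  rw [List.take_length] at hP₁ hP₂
  refine hP₁.subset_of_card_le hinj hP₂ (not_lt.1 fun hlt => ?_)
  obtain ⟨w, hwU, hwP, hw⟩ := hrun₁.exists_threshold_le_of_card_lt hU hloc hinj hs₁ _ le_rfl
    _ hP₂ (by rwa [List.take_length])
  have hstop := hrun₂.score_lt hs₂ (hU hwU) fun h => hwP (mem_inter.2 ⟨h, hwU⟩)
  rw [hloc w hwU] at hstop
  linarith

theorem toFinset_subset_toFinset {ι : Type} [Fintype ι] {Sc : ι → Finset F} {T₁ T₂ : Finset X}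
    {us₁ us₂ : List F} (hloc : ∀ c, ∀ v ∈ Sc c, ∀ L, s v L = s v (L ∩ Sc c))
    (hinj : ∀ c, ∀ Q ⊆ Sc c, Set.InjOn (s · Q) (Sc c))
    (hrun₁ : IsRun (univ.biUnion Sc) feats τ γ T₁ ∅ ∅ us₁)
    (hs₁ : ∀ L v, gval feats T₁ (active feats τ L ∅ T₁) v = s v L)
    (hrun₂ : IsRun (univ.biUnion Sc) feats τ γ T₂ ∅ ∅ us₂)
    (hs₂ : ∀ L v, gval feats T₂ (active feats τ L ∅ T₂) v = s v L)
    (hT : γ / #T₂ ≤ γ / #T₁) : us₁.toFinset ⊆ us₂.toFinset := by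
  intro v hv
  obtain ⟨c, -, hvc⟩ := mem_biUnion.1 (hrun₁.toFinset_subset hv)
  have hU : Sc c ⊆ univ.biUnion Sc := subset_biUnion_of_mem Sc (mem_univ c)
  exact (mem_inter.1 (toFinset_inter_subset hU (hloc c) (hinj c) hrun₁ hs₁ hrun₂ hs₂ hT
    (mem_inter.2 ⟨hv, hvc⟩))).1

end IsRun

end Run

section Chunks

variable {F X : Type} [DecidableEq F] [DecidableEq X] {C : ℕ} {Sc : Fin C → Finset F}
  {label : X → Fin C} {feats : X → Finset F} {nA : Fin C → Finset F → ℕ}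
  {chunk : ℕ → Finset X} {τ n : ℕ}

theorem hval_eq_hval_inter (hdisj : ∀ c c', c ≠ c' → Disjoint (Sc c) (Sc c')) {c : Fin C}
    {v : F} (hv : v ∈ Sc c) (L : Finset F) :
    hval C Sc nA τ n v L = hval C Sc nA τ n v (L ∩ Sc c) := by
  unfold hval
  congr 1
  refine sum_congr rfl fun c' _ => sum_congr rfl fun A hA => ?_
  by_cases hvA : v ∈ A
  · obtain rfl : c' = c := by
      by_contra hne
      exact disjoint_left.1 (hdisj c' c hne) (mem_powerset.1 hA hvA) hv
    rw [← inter_assoc, inter_eq_left.2 (inter_subset_left.trans (mem_powerset.1 hA))]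
  · simp [hvA]

theorem card_cumT (hchunkdisj : ∀ j j', j ≠ j' → Disjoint (chunk j) (chunk j'))
    (hchunkcard : ∀ j, 1 ≤ j → #(chunk j) = n) (j : ℕ) : #(cumT chunk j) = j * n := by
  rw [cumT, card_biUnion fun a _ b _ hab => hchunkdisj a b hab,
    sum_congr rfl fun l hl => hchunkcard l (mem_Icc.1 hl).1, sum_const, Nat.card_Icc,
    Nat.add_sub_cancel, smul_eq_mul]

/-- Sorting the points of a chunk by label and feature set. -/
theorem featCount_active_chunk (hfeats : ∀ x, feats x ⊆ Sc (label x))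
    (hcount : ∀ j, 1 ≤ j → ∀ c : Fin C, ∀ A ∈ (Sc c).powerset,
      #((chunk j).filter fun x => label x = c ∧ feats x = A) = nA c A)
    {j : ℕ} (hj : 1 ≤ j) (L : Finset F) (v : F) :
    featCount feats (active feats τ L ∅ (chunk j)) v
      = ∑ c : Fin C, ∑ A ∈ (Sc c).powerset, if v ∈ A ∧ #(A ∩ L) < τ then nA c A else 0 := by
  rw [featCount, card_eq_sum_card_fiberwise (f := label) (t := univ) fun _ _ => mem_coe.2
    (mem_univ _)]
  refine sum_congr rfl fun c _ => ?_
  rw [card_eq_sum_card_fiberwise (f := feats) (t := (Sc c).powerset) fun x hx => by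
    rw [mem_coe, mem_filter] at hx
    exact mem_coe.2 (mem_powerset.2 (hx.2 ▸ hfeats x))]
  refine sum_congr rfl fun A hA => ?_
  simp only [active, sdiff_empty, filter_filter]
  split_ifs with hvA
  · rw [← hcount j hj c A hA]
    congr 1
    refine filter_congr fun x _ => ⟨fun h => ⟨h.1.2, h.2⟩, ?_⟩
    rintro ⟨hl, rfl⟩
    exact ⟨⟨⟨hvA.2, hvA.1⟩, hl⟩, rfl⟩
  · refine card_eq_zero.2 (filter_eq_empty_iff.2 ?_)
    rintro x - ⟨⟨⟨hL, hv⟩, -⟩, rfl⟩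
    exact hvA ⟨hv, hL⟩

/-- The frequencies on `T_{1:j}` do not depend on `j`: numerator and denominator both scale
with `j`. -/
theorem gval_active_cumT (hfeats : ∀ x, feats x ⊆ Sc (label x))
    (hcount : ∀ j, 1 ≤ j → ∀ c : Fin C, ∀ A ∈ (Sc c).powerset,
      #((chunk j).filter fun x => label x = c ∧ feats x = A) = nA c A)
    (hchunkdisj : ∀ j j', j ≠ j' → Disjoint (chunk j) (chunk j'))
    (hchunkcard : ∀ j, 1 ≤ j → #(chunk j) = n) {j : ℕ} (hj : 1 ≤ j) (L : Finset F) (v : F) :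
    gval feats (cumT chunk j) (active feats τ L ∅ (cumT chunk j)) v = hval C Sc nA τ n v L := by
  have hactive : active feats τ L ∅ (cumT chunk j)
      = (Icc 1 j).biUnion fun l => active feats τ L ∅ (chunk l) := by
    simp only [active, cumT, sdiff_empty, filter_biUnion]
  have hcount' : featCount feats (active feats τ L ∅ (cumT chunk j)) v
      = j * ∑ c : Fin C, ∑ A ∈ (Sc c).powerset,
          if v ∈ A ∧ #(A ∩ L) < τ then nA c A else 0 := by
    have hsub : ∀ l, (active feats τ L ∅ (chunk l)).filter (v ∈ feats ·) ⊆ chunk l :=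
      fun l => (filter_subset _ _).trans ((filter_subset _ _).trans sdiff_subset)
    rw [hactive, featCount, filter_biUnion, card_biUnion fun a _ b _ hab =>
      (hchunkdisj a b hab).mono (hsub a) (hsub b)]
    refine (sum_congr rfl fun l hl =>
      featCount_active_chunk hfeats hcount (mem_Icc.1 hl).1 L v).trans ?_
    rw [sum_const, Nat.card_Icc, Nat.add_sub_cancel, smul_eq_mul]
  have hj0 : (j : ℝ) ≠ 0 := by positivity
  rw [gval, hcount', card_cumT hchunkdisj hchunkcard, hval]
  push_cast
  rw [mul_div_mul_left _ _ hj0, div_eq_inv_mul, one_div]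
  congr 1
  refine sum_congr rfl fun c _ => sum_congr rfl fun A _ => ?_
  split_ifs <;> simp

theorem cold_learns_strictly_more_general
    {F X : Type} [DecidableEq F] [DecidableEq X]
    (C τ : ℕ) (γ : ℝ) (n : ℕ)
    (Sc : Fin C → Finset F) (label : X → Fin C) (feats : X → Finset F)
    (nA : Fin C → Finset F → ℕ) (chunk : ℕ → Finset X)
    (hγ : 0 < γ)
    (hdisjS : ∀ c c', c ≠ c' → Disjoint (Sc c) (Sc c'))
    (hfeats : ∀ x, feats x ⊆ Sc (label x))
    (hchunkdisj : ∀ j j', j ≠ j' → Disjoint (chunk j) (chunk j'))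
    (hchunkcard : ∀ j, 1 ≤ j → (chunk j).card = n)
    (hcount : ∀ j, 1 ≤ j → ∀ c : Fin C, ∀ A ∈ (Sc c).powerset,
      ((chunk j).filter fun x => label x = c ∧ feats x = A).card = nA c A)
    (hinj : ∀ L : Finset F, L ⊆ Finset.univ.biUnion Sc →
      ∀ c : Fin C, ∀ v₁ ∈ Sc c, ∀ v₂ ∈ Sc c,
        hval C Sc nA τ n v₁ L = hval C Sc nA τ n v₂ L → v₁ = v₂)
    (usc : ℕ → List F)
    (hcold : ∀ j : ℕ,
      IsRun (Finset.univ.biUnion Sc) feats τ γ (cumT chunk (j + 1)) ∅ ∅ (usc (j + 1)))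
    (δ : ℝ) (hδpos : 0 < δ)
    (hδmem : ∃ v ∈ Finset.univ.biUnion Sc \ (usc 1).toFinset,
      hval C Sc nA τ n v ((usc 1).toFinset) = δ) :
    ∀ J : ℕ, γ / (δ * (n : ℝ)) < (J : ℝ) →
      (usc 1).toFinset ⊂ (usc J).toFinset := by
  intro J hJ
  obtain ⟨v₀, hv₀, hv₀δ⟩ := hδmem
  have hn : 0 < n := Nat.pos_of_ne_zero fun hn => by simp [hval, hn] at hv₀δ; linarith
  have hJ1 : 1 ≤ J := by
    have : (0 : ℝ) < J := (by positivity : 0 < γ / (δ * n)).trans hJ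
    exact_mod_cast this
  have hs j (hj : 1 ≤ j) := gval_active_cumT (τ := τ) hfeats hcount hchunkdisj hchunkcard hj
  have hcard (j : ℕ) : (#(cumT chunk j) : ℝ) = j * n := by
    exact_mod_cast card_cumT hchunkdisj hchunkcard j
  have hrunJ : IsRun (univ.biUnion Sc) feats τ γ (cumT chunk J) ∅ ∅ (usc J) := by
    simpa [Nat.sub_add_cancel hJ1] using hcold (J - 1)
  have hsub : (usc 1).toFinset ⊆ (usc J).toFinset := by
    refine IsRun.toFinset_subset_toFinset (fun c v hv L => hval_eq_hval_inter hdisjS hv L)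
      (fun c Q hQ v₁ h₁ v₂ h₂ => hinj Q (hQ.trans (subset_biUnion_of_mem Sc (mem_univ c))) c
        v₁ h₁ v₂ h₂) (hcold 0) (hs 1 le_rfl) hrunJ (hs J hJ1) ?_
    rw [hcard, hcard]
    gcongr
  refine ssubset_of_subset_of_ne hsub fun heq => ?_
  have hstop := hrunJ.score_lt (hs J hJ1) (mem_sdiff.1 hv₀).1 (heq ▸ (mem_sdiff.1 hv₀).2)
  rw [← heq, hv₀δ, hcard, lt_div_iff₀ (by positivity)] at hstop
  rw [div_lt_iff₀ (by positivity)] at hJ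
  linarith

/-- with `G = L_cold^(1)` and
`δ = max_{v ∈ S ∖ G} h(v; G) > 0`, for every `J > γ/(δ·n)` cold-starting at
experiment `J` learns strictly more features than in the first experiment:
`L_cold^(1) ⊊ L_cold^(J)`. -/
theorem cold_learns_strictly_more
    {F X : Type} [DecidableEq F] [DecidableEq X]
    (C K τ : ℕ) (γ : ℝ) (n : ℕ)
    (Sc : Fin C → Finset F) (label : X → Fin C) (feats : X → Finset F)
    (nA : Fin C → Finset F → ℕ) (chunk : ℕ → Finset X)
    (hγ : 0 < γ) (hτK : τ < K)
    (hK : ∀ c, (Sc c).card = K)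
    (hdisjS : ∀ c c', c ≠ c' → Disjoint (Sc c) (Sc c'))
    (hfeats : ∀ x, feats x ⊆ Sc (label x))
    (hnA : ∀ c, ∀ A ∈ (Sc c).powerset, 1 ≤ nA c A)
    (hn : n = ∑ c : Fin C, ∑ A ∈ (Sc c).powerset, nA c A)
    (hchunkdisj : ∀ j j', j ≠ j' → Disjoint (chunk j) (chunk j'))
    (hchunkcard : ∀ j, 1 ≤ j → (chunk j).card = n)
    (hcount : ∀ j, 1 ≤ j → ∀ c : Fin C, ∀ A ∈ (Sc c).powerset,
      ((chunk j).filter fun x => label x = c ∧ feats x = A).card = nA c A)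
    (hC : 0 < C) (hτpos : 0 < τ)
    (hinj : ∀ L : Finset F, L ⊆ Finset.univ.biUnion Sc →
      ∀ c : Fin C, ∀ v₁ ∈ Sc c, ∀ v₂ ∈ Sc c,
        hval C Sc nA τ n v₁ L = hval C Sc nA τ n v₂ L → v₁ = v₂)
    (hii : ∀ c : Fin C, ∃ v : Fin τ → F, Function.Injective v ∧ (∀ i, v i ∈ Sc c) ∧
      ∀ j, 1 ≤ j →
        ((∀ i : Fin τ, (i : ℕ) + 1 < τ →
            γ / (n : ℝ) ≤ gval feats (chunk j) (chunk j) (v i)) ∧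
          gval feats (chunk j) (chunk j)
            (v ⟨τ - 1, Nat.sub_lt hτpos Nat.one_pos⟩) < γ / (n : ℝ)))
    (usc : ℕ → List F)
    (hcold : ∀ j : ℕ,
      IsRun (Finset.univ.biUnion Sc) feats τ γ (cumT chunk (j + 1)) ∅ ∅ (usc (j + 1)))
    (δ : ℝ) (hδpos : 0 < δ)
    (hδub : ∀ v ∈ Finset.univ.biUnion Sc \ (usc 1).toFinset,
      hval C Sc nA τ n v ((usc 1).toFinset) ≤ δ)
    (hδmem : ∃ v ∈ Finset.univ.biUnion Sc \ (usc 1).toFinset,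
      hval C Sc nA τ n v ((usc 1).toFinset) = δ) :
    ∀ J : ℕ, γ / (δ * (n : ℝ)) < (J : ℝ) →
      (usc 1).toFinset ⊂ (usc J).toFinset :=
  cold_learns_strictly_more_general C τ γ n Sc label feats nA chunk hγ hdisjS hfeats hchunkdisj
    hchunkcard hcount hinj usc hcold δ hδpos hδmem
end Chunks
end

section
/- For every J ≥ 2, the warm-starting training time is strictly less than the cold-starting training time: T_warm^(J) < T_cold^(J). More precisely, T_warm^(J) ≤ J·n while T_cold^(J) = n·J·(J+1)/2. -/
open Finset

lemma gauss_icc_aux (J : ℕ) : 2 * (∑ j ∈ Finset.Icc 1 J, j) = J * (J + 1) := by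
  induction J with
  | zero => simp
  | succ m ih =>
    rw [Finset.sum_Icc_succ_top (by omega : 1 ≤ m + 1), Nat.mul_add, ih]
    ring

/-- Theorem 3.4, training-time part: for every `J ≥ 2` the
warm-starting training time is strictly less than the cold-starting training
time; more precisely `T_warm^(J) ≤ J·n` while `T_cold^(J) = n·J·(J+1)/2`. -/
theorem warm_time_lt_cold_time
    {F X : Type} [DecidableEq F] [DecidableEq X]
    (C K τ : ℕ) (γ : ℝ) (n : ℕ)
    (Sc : Fin C → Finset F) (label : X → Fin C) (feats : X → Finset F)
    (nA : Fin C → Finset F → ℕ) (chunk : ℕ → Finset X)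
    (hγ : 0 < γ) (hτK : τ < K)
    (hK : ∀ c, (Sc c).card = K)
    (hdisjS : ∀ c c', c ≠ c' → Disjoint (Sc c) (Sc c'))
    (hfeats : ∀ x, feats x ⊆ Sc (label x))
    (hnA : ∀ c, ∀ A ∈ (Sc c).powerset, 1 ≤ nA c A)
    (hn : n = ∑ c : Fin C, ∑ A ∈ (Sc c).powerset, nA c A)
    (hchunkdisj : ∀ j j', j ≠ j' → Disjoint (chunk j) (chunk j'))
    (hchunkcard : ∀ j, 1 ≤ j → (chunk j).card = n)
    (hcount : ∀ j, 1 ≤ j → ∀ c : Fin C, ∀ A ∈ (Sc c).powerset,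
      ((chunk j).filter fun x => label x = c ∧ feats x = A).card = nA c A)
    (hC : 0 < C) (hτpos : 0 < τ)
    (hinj : ∀ L : Finset F, L ⊆ Finset.univ.biUnion Sc →
      ∀ c : Fin C, ∀ v₁ ∈ Sc c, ∀ v₂ ∈ Sc c,
        hval C Sc nA τ n v₁ L = hval C Sc nA τ n v₂ L → v₁ = v₂)
    (hii : ∀ c : Fin C, ∃ v : Fin τ → F, Function.Injective v ∧ (∀ i, v i ∈ Sc c) ∧
      ∀ j, 1 ≤ j →
        ((∀ i : Fin τ, (i : ℕ) + 1 < τ →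
            γ / (n : ℝ) ≤ gval feats (chunk j) (chunk j) (v i)) ∧
          gval feats (chunk j) (chunk j)
            (v ⟨τ - 1, Nat.sub_lt hτpos Nat.one_pos⟩) < γ / (n : ℝ)))
    (Lw : ℕ → Finset F) (Mw : ℕ → Finset X) (usw : ℕ → List F)
    (hLw0 : Lw 0 = ∅) (hMw0 : Mw 0 = ∅)
    (hwarm : ∀ j : ℕ,
      IsRun (Finset.univ.biUnion Sc) feats τ γ (cumT chunk (j + 1)) (Mw j) (Lw j)
        (usw (j + 1)) ∧
      Lw (j + 1) = Lw j ∪ (usw (j + 1)).toFinset ∧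
      Mw (j + 1) = finalM feats τ (cumT chunk (j + 1)) (Mw j) (Lw j) (usw (j + 1)))
 :
    ∀ J : ℕ, 2 ≤ J →
      (∑ j ∈ Finset.Icc 1 J,
          (active feats τ (Lw (j - 1)) (Mw (j - 1)) (cumT chunk j)).card) <
        (∑ j ∈ Finset.Icc 1 J,
          (active feats τ (∅ : Finset F) (∅ : Finset X) (cumT chunk j)).card) ∧
      (∑ j ∈ Finset.Icc 1 J,
          (active feats τ (Lw (j - 1)) (Mw (j - 1)) (cumT chunk j)).card) ≤ J * n ∧
      (∑ j ∈ Finset.Icc 1 J,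
          (active feats τ (∅ : Finset F) (∅ : Finset X) (cumT chunk j)).card) =
        n * J * (J + 1) / 2 := by
  intro J hJ
  -- n ≥ 1
  have hn1 : 1 ≤ n := by
    have c0 : Fin C := ⟨0, hC⟩
    have h1 : 1 ≤ nA c0 ∅ := hnA c0 ∅ (Finset.empty_mem_powerset _)
    have h2 : nA c0 ∅ ≤ ∑ A ∈ (Sc c0).powerset, nA c0 A :=
      Finset.single_le_sum (fun _ _ => Nat.zero_le _) (Finset.empty_mem_powerset _)
    have h3 : (∑ A ∈ (Sc c0).powerset, nA c0 A) ≤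
        ∑ c : Fin C, ∑ A ∈ (Sc c).powerset, nA c A :=
      Finset.single_le_sum (f := fun c => ∑ A ∈ (Sc c).powerset, nA c A)
        (fun _ _ => Nat.zero_le _) (Finset.mem_univ _)
    omega
  -- cold term value
  have hcold : ∀ j, 1 ≤ j →
      (active feats τ (∅ : Finset F) (∅ : Finset X) (cumT chunk j)).card = j * n := by
    intro j hj
    have h1 : active feats τ (∅ : Finset F) (∅ : Finset X) (cumT chunk j)
        = cumT chunk j := by
      unfold active
      rw [Finset.sdiff_empty]
      apply Finset.filter_true_of_mem
      intro x _
      simpa using hτpos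
    rw [h1]
    unfold cumT
    rw [Finset.card_biUnion (fun a _ b _ hab => hchunkdisj a b hab)]
    rw [Finset.sum_congr rfl (fun i hi => hchunkcard i (Finset.mem_Icc.mp hi).1)]
    simp [Nat.card_Icc, mul_comm]
  -- active is a subset of T
  have hactive_sub : ∀ (L : Finset F) (M T : Finset X), active feats τ L M T ⊆ T := by
    intro L M T x hx
    exact (Finset.mem_sdiff.mp (Finset.mem_filter.mp hx).1).1
  -- first warm term
  have hwarm1 : (active feats τ (Lw 0) (Mw 0) (cumT chunk 1)).card ≤ n := by
    have h1 : (cumT chunk 1).card = n := by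
      unfold cumT
      simp [hchunkcard 1 le_rfl]
    calc (active feats τ (Lw 0) (Mw 0) (cumT chunk 1)).card
        ≤ (cumT chunk 1).card := Finset.card_le_card (hactive_sub _ _ _)
      _ = n := h1
  -- later warm terms : active set is inside the new chunk
  have hwarmsub : ∀ k, active feats τ (Lw (k + 1)) (Mw (k + 1)) (cumT chunk (k + 2))
      ⊆ chunk (k + 2) := by
    intro k x hx
    rw [active, Finset.mem_filter, Finset.mem_sdiff] at hx
    obtain ⟨⟨hxT, hxM⟩, hxτ⟩ := hx
    have hM : Mw (k + 1) = Mw k ∪ active feats τ (Lw (k + 1)) (Mw k) (cumT chunk (k + 1)) := by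
      rw [(hwarm k).2.2, finalM, (hwarm k).2.1]
    have hxnotprev : x ∉ cumT chunk (k + 1) := by
      intro hxprev
      apply hxM
      rw [hM, Finset.mem_union]
      right
      rw [active, Finset.mem_filter, Finset.mem_sdiff]
      refine ⟨⟨hxprev, ?_⟩, hxτ⟩
      intro hxMk
      exact hxM (by rw [hM]; exact Finset.mem_union_left _ hxMk)
    rw [cumT, Finset.mem_biUnion] at hxT
    obtain ⟨i, hi, hxi⟩ := hxT
    rw [Finset.mem_Icc] at hi
    rcases Nat.lt_or_ge i (k + 2) with h | h
    · exfalso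
      apply hxnotprev
      rw [cumT, Finset.mem_biUnion]
      exact ⟨i, Finset.mem_Icc.mpr ⟨hi.1, by omega⟩, hxi⟩
    · have : i = k + 2 := by omega
      rwa [this] at hxi
  -- each warm term ≤ n
  have hwarmterm : ∀ j ∈ Finset.Icc 1 J,
      (active feats τ (Lw (j - 1)) (Mw (j - 1)) (cumT chunk j)).card ≤ n := by
    intro j hj
    have hj1 : 1 ≤ j := (Finset.mem_Icc.mp hj).1
    rcases Nat.lt_or_ge j 2 with h | h
    · have : j = 1 := by omega
      subst this
      simpa using hwarm1
    · obtain ⟨k, rfl⟩ : ∃ k, j = k + 2 := ⟨j - 2, by omega⟩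
      have h1 : (k + 2) - 1 = k + 1 := by omega
      rw [h1]
      calc (active feats τ (Lw (k + 1)) (Mw (k + 1)) (cumT chunk (k + 2))).card
          ≤ (chunk (k + 2)).card := Finset.card_le_card (hwarmsub k)
        _ = n := hchunkcard (k + 2) (by omega)
  -- warm sum ≤ J * n
  have hwarmsum : (∑ j ∈ Finset.Icc 1 J,
      (active feats τ (Lw (j - 1)) (Mw (j - 1)) (cumT chunk j)).card) ≤ J * n := by
    calc (∑ j ∈ Finset.Icc 1 J,
        (active feats τ (Lw (j - 1)) (Mw (j - 1)) (cumT chunk j)).card)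
        ≤ ∑ _j ∈ Finset.Icc 1 J, n := Finset.sum_le_sum hwarmterm
      _ = J * n := by simp [Nat.card_Icc]
  -- Gauss sum
  have hgauss : 2 * (∑ j ∈ Finset.Icc 1 J, j) = J * (J + 1) := gauss_icc_aux J
  set m := ∑ j ∈ Finset.Icc 1 J, j with hm
  -- cold sum value
  have hcoldsum : (∑ j ∈ Finset.Icc 1 J,
      (active feats τ (∅ : Finset F) (∅ : Finset X) (cumT chunk j)).card)
      = n * J * (J + 1) / 2 := by
    have h1 : (∑ j ∈ Finset.Icc 1 J,
        (active feats τ (∅ : Finset F) (∅ : Finset X) (cumT chunk j)).card)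
        = ∑ j ∈ Finset.Icc 1 J, j * n :=
      Finset.sum_congr rfl (fun j hj => hcold j (Finset.mem_Icc.mp hj).1)
    rw [h1, ← Finset.sum_mul, ← hm]
    have h2 : n * J * (J + 1) = 2 * (m * n) := by
      rw [show 2 * (m * n) = (2 * m) * n by ring, hgauss]; ring
    rw [h2, Nat.mul_div_cancel_left _ (by norm_num : 0 < 2)]
  -- J < m
  have hJm : J < m := by
    have hJJ : 2 * J ≤ J * J := Nat.mul_le_mul_right J hJ
    have h2 : 2 * m = J * J + J := by rw [hgauss]; ring
    omega
  have hstrict : J * n < n * J * (J + 1) / 2 := by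
    have h2 : n * J * (J + 1) = 2 * (m * n) := by
      rw [show 2 * (m * n) = (2 * m) * n by ring, hgauss]; ring
    rw [h2, Nat.mul_div_cancel_left _ (by norm_num : 0 < 2)]
    exact mul_lt_mul_of_pos_right hJm (by omega : (0:ℕ) < n)
  refine ⟨?_, hwarmsum, hcoldsum⟩
  rw [hcoldsum]
  exact lt_of_le_of_lt hwarmsum hstrict
end

section
/- For every J ≥ 1, the learned feature set of the cold-started model equals that of the ideal model: L_cold^(J) = L_ideal^(J). In particular, for every J ≥ 2, ACC(L_cold^(J)) = ACC(L_ideal^(J)). -/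
open Finset

/-!
Nothing is memorized at the start of an experiment, so on `T_{1:j}` the frequency `g` of a
feature among the active points is `h(v; L)`, independently of `j`: every experiment runs the
same greedy process on the score `h`, only with the threshold `γ / (j n)`, which decreases
in `j`. The score of a feature of class `c` depends only on the learned features of class `c`
and, by assumption (i), has no ties inside a class, so the sequence learned in each class is
determined by the threshold. Lowering the threshold only extends that sequence, and the
extension is exactly what the ideal model learns when it resumes from the previous learned set.
-/

open Function

variable {F X : Type} [DecidableEq F]

theorem sdiff_eq_sdiff_of_inter_eq {U L L' : Finset F} (hL : L ∩ U = L' ∩ U) :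
    U \ L = U \ L' := by
  rw [← sdiff_inter_self_left, inter_comm, hL, inter_comm, sdiff_inter_self_left]

def LocalOn (h : F → Finset F → ℝ) (U : Finset F) : Prop :=
  ∀ v ∈ U, ∀ L L' : Finset F, L ∩ U = L' ∩ U → h v L = h v L'

theorem LocalOn.injOn {h : F → Finset F → ℝ} {U : Finset F} (hloc : LocalOn h U)
    (hinj : ∀ L ⊆ U, Set.InjOn (h · L) U) (L : Finset F) : Set.InjOn (h · L) U := by
  have hL : L ∩ U = L ∩ U ∩ U := by rw [inter_assoc, inter_self]
  intro v hv w hw hvw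
  refine hinj (L ∩ U) inter_subset_right hv hw ?_
  simpa only [hloc v hv _ _ hL, hloc w hw _ _ hL] using hvw

/-- `IsRun` read one step at a time, with the frequency `g` on the active points abstracted
to a score `h v L` of the feature `v` given the learned set `L`. -/
inductive GreedyRun (U : Finset F) (h : F → Finset F → ℝ) (θ : ℝ) :
    Finset F → List F → Prop
  | nil {L : Finset F} : (∀ u ∈ U \ L, h u L < θ) → GreedyRun U h θ L []
  | cons {L : Finset F} {w : F} {ws : List F} : w ∈ U \ L → θ ≤ h w L →
      (∀ u ∈ U \ L, h u L ≤ h w L) → GreedyRun U h θ (insert w L) ws →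
      GreedyRun U h θ L (w :: ws)

namespace GreedyRun

variable {U V L L' : Finset F} {h : F → Finset F → ℝ} {θ θ' : ℝ} {ws ws' zs : List F}

theorem toFinset_subset (hr : GreedyRun U h θ L ws) : ws.toFinset ⊆ U := by
  induction hr with
  | nil => simp
  | cons hw _ _ _ ih => simpa [insert_subset_iff] using ⟨(mem_sdiff.1 hw).1, ih⟩

theorem of_inter_eq (hloc : LocalOn h U) (hr : GreedyRun U h θ L ws) (hL : L ∩ U = L' ∩ U) :
    GreedyRun U h θ L' ws := by
  induction hr generalizing L' with
  | @nil L hend =>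
    refine .nil fun u hu => ?_
    rw [← sdiff_eq_sdiff_of_inter_eq hL] at hu
    rw [← hloc u (mem_sdiff.1 hu).1 _ _ hL]
    exact hend u hu
  | @cons L w ws hw hθ hmax _ ih =>
    have hwU := (mem_sdiff.1 hw).1
    rw [sdiff_eq_sdiff_of_inter_eq hL] at hw hmax
    refine .cons hw (hloc w hwU _ _ hL ▸ hθ) (fun u hu => ?_) (ih ?_)
    · rw [← hloc u (mem_sdiff.1 hu).1 _ _ hL, ← hloc w hwU _ _ hL]
      exact hmax u hu
    · rw [insert_inter_of_mem hwU, insert_inter_of_mem hwU, hL]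

theorem filter (hVU : V ⊆ U) (hloc : LocalOn h V) (hr : GreedyRun U h θ L ws) :
    GreedyRun V h θ L (ws.filter (· ∈ V)) := by
  induction hr with
  | nil hend => exact .nil fun u hu => hend u (sdiff_subset_sdiff hVU le_rfl hu)
  | @cons L w ws hw hθ hmax _ ih =>
    by_cases hwV : w ∈ V
    · rw [List.filter_cons_of_pos (by simpa using hwV)]
      exact .cons (mem_sdiff.2 ⟨hwV, (mem_sdiff.1 hw).2⟩) hθ
        (fun u hu => hmax u (sdiff_subset_sdiff hVU le_rfl hu)) ih
    · rw [List.filter_cons_of_neg (by simpa using hwV)]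
      exact ih.of_inter_eq hloc (insert_inter_of_notMem hwV)

theorem eq_of_injOn (hinj : ∀ L, Set.InjOn (h · L) U) (hr : GreedyRun U h θ L ws)
    (hr' : GreedyRun U h θ L ws') : ws = ws' := by
  induction hr generalizing ws' with
  | nil hend =>
    cases hr' with
    | nil => rfl
    | cons hw' hθ' _ _ => exact absurd hθ' (not_le.2 (hend _ hw'))
  | @cons L w ws hw hθ hmax _ ih =>
    cases hr' with
    | nil hend' => exact absurd hθ (not_le.2 (hend' _ hw))
    | @cons _ w' _ hw' _ hmax' hrest' =>
      obtain rfl : w = w' := hinj L (mem_sdiff.1 hw).1 (mem_sdiff.1 hw').1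
        (le_antisymm (hmax' w hw) (hmax w' hw'))
      rw [ih hrest']

theorem eq_append (hinj : ∀ L, Set.InjOn (h · L) U) (hθ : θ' ≤ θ)
    (hr : GreedyRun U h θ L ws) (hz : GreedyRun U h θ' (L ∪ ws.toFinset) zs)
    (hr' : GreedyRun U h θ' L ws') : ws' = ws ++ zs := by
  induction hr generalizing ws' with
  | nil _ => simpa using hr'.eq_of_injOn hinj (by simpa using hz)
  | @cons L w ws hw hθw hmax _ ih =>
    cases hr' with
    | nil hend' => exact absurd (hθ.trans hθw) (not_le.2 (hend' w hw))
    | @cons _ w' _ hw' _ hmax' hrest' =>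
      obtain rfl : w' = w := hinj L (mem_sdiff.1 hw').1 (mem_sdiff.1 hw).1
        (le_antisymm (hmax w' hw') (hmax' w hw))
      rw [ih (by simpa [insert_union, union_insert] using hz) hrest', List.cons_append]

end GreedyRun

section Partition

variable {ι : Type} [Fintype ι] {U : ι → Finset F}

theorem eq_of_forall_inter_eq {A B : Finset F} (hA : A ⊆ univ.biUnion U)
    (hB : B ⊆ univ.biUnion U) (hAB : ∀ i, A ∩ U i = B ∩ U i) : A = B := by
  rw [← inter_eq_left.2 hA, ← inter_eq_left.2 hB, inter_biUnion, inter_biUnion]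
  simp only [hAB]

theorem toFinset_filter_mem (ws : List F) (V : Finset F) :
    (ws.filter (· ∈ V)).toFinset = ws.toFinset ∩ V := by
  ext; simp

variable {h : F → Finset F → ℝ} {θ θ' : ℝ} {L : Finset F} {ws ws' zs : List F}

theorem GreedyRun.toFinset_eq (hloc : ∀ i, LocalOn h (U i))
    (hinj : ∀ i, ∀ L ⊆ U i, Set.InjOn (h · L) (U i))
    (hr : GreedyRun (univ.biUnion U) h θ L ws) (hr' : GreedyRun (univ.biUnion U) h θ L ws') :
    ws.toFinset = ws'.toFinset := by
  refine eq_of_forall_inter_eq hr.toFinset_subset hr'.toFinset_subset fun i => ?_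
  have hUi : U i ⊆ univ.biUnion U := subset_biUnion_of_mem U (mem_univ i)
  rw [← toFinset_filter_mem, ← toFinset_filter_mem,
    (hr.filter hUi (hloc i)).eq_of_injOn ((hloc i).injOn (hinj i)) (hr'.filter hUi (hloc i))]

theorem GreedyRun.toFinset_eq_union (hloc : ∀ i, LocalOn h (U i))
    (hinj : ∀ i, ∀ L ⊆ U i, Set.InjOn (h · L) (U i)) (hθ : θ' ≤ θ)
    (hr : GreedyRun (univ.biUnion U) h θ L ws)
    (hz : GreedyRun (univ.biUnion U) h θ' (L ∪ ws.toFinset) zs)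
    (hr' : GreedyRun (univ.biUnion U) h θ' L ws') :
    ws'.toFinset = ws.toFinset ∪ zs.toFinset := by
  refine eq_of_forall_inter_eq hr'.toFinset_subset
    (union_subset hr.toFinset_subset hz.toFinset_subset) fun i => ?_
  have hUi : U i ⊆ univ.biUnion U := subset_biUnion_of_mem U (mem_univ i)
  have hzi : GreedyRun (U i) h θ' (L ∪ (ws.filter (· ∈ U i)).toFinset)
      (zs.filter (· ∈ U i)) := by
    refine (hz.filter hUi (hloc i)).of_inter_eq (hloc i) ?_
    rw [toFinset_filter_mem, union_inter_distrib_right, union_inter_distrib_right,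
      inter_assoc, inter_self]
  rw [← toFinset_filter_mem, union_inter_distrib_right, ← toFinset_filter_mem,
    ← toFinset_filter_mem, ← List.toFinset_append,
    (hr.filter hUi (hloc i)).eq_append ((hloc i).injOn (hinj i)) hθ hzi
      (hr'.filter hUi (hloc i))]

end Partition

section Runs

variable [DecidableEq X] {S : Finset F} {feats : X → Finset F} {τ : ℕ} {γ : ℝ}
  {T M : Finset X}

theorem IsRun.tail {L0 : Finset F} {w : F} {ws : List F}
    (hr : IsRun S feats τ γ T M L0 (w :: ws)) : IsRun S feats τ γ T M (insert w L0) ws := by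
  have hlearned (i : ℕ) :
      learnedAfter L0 (w :: ws) (i + 1) = learnedAfter (insert w L0) ws i := by
    ext; simp [learnedAfter, List.take_succ_cons]
  refine ⟨fun i hi => ?_, fun i hi => ?_, fun i hi => ?_, ?_⟩
  · simpa [hlearned] using hr.mem (i + 1) (by simpa using hi)
  · simpa [hlearned] using hr.maximal (i + 1) (by simpa using hi)
  · simpa [hlearned] using hr.threshold (i + 1) (by simpa using hi)
  · simpa [hlearned] using hr.stopped

theorem IsRun.greedyRun {h : F → Finset F → ℝ}
    (hg : ∀ L v, gval feats T (active feats τ L M T) v = h v L) {L0 : Finset F} {us : List F}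
    (hr : IsRun S feats τ γ T M L0 us) : GreedyRun S h (γ / T.card) L0 us := by
  induction us generalizing L0 with
  | nil =>
    refine .nil fun u hu => ?_
    simpa [learnedAfter, hg] using hr.stopped u (by simpa [learnedAfter] using hu)
  | cons w ws ih =>
    have h0 : 0 < (w :: ws).length := by simp
    refine .cons (by simpa [learnedAfter] using hr.mem 0 h0)
      (by simpa [learnedAfter, hg] using hr.threshold 0 h0) (fun u hu => ?_) (ih hr.tail)
    simpa [learnedAfter, hg] using hr.maximal 0 h0 u (by simpa [learnedAfter] using hu)

end Runs

theorem card_filter_feats_eq_sum {ι : Type} [Fintype ι] [DecidableEq ι] (Sc : ι → Finset F)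
    (label : X → ι) (feats : X → Finset F) (nA : ι → Finset F → ℕ)
    (hfeats : ∀ x, feats x ⊆ Sc (label x)) (T : Finset X)
    (hcount : ∀ c, ∀ A ∈ (Sc c).powerset,
      (T.filter fun x => label x = c ∧ feats x = A).card = nA c A)
    (p : Finset F → Prop) [DecidablePred p] :
    (T.filter fun x => p (feats x)).card
      = ∑ c, ∑ A ∈ (Sc c).powerset, if p A then nA c A else 0 := by
  rw [card_eq_sum_card_fiberwise (f := label) (t := univ) fun x _ => mem_univ _]
  refine sum_congr rfl fun c _ => ?_
  rw [card_eq_sum_card_fiberwise (f := feats) (t := (Sc c).powerset) fun x hx => by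
    simp only [coe_filter, Set.mem_ofPred_eq] at hx
    exact mem_powerset.2 (hx.2 ▸ hfeats x)]
  refine sum_congr rfl fun A hA => ?_
  rw [filter_filter, filter_filter]
  split_ifs with hp
  · rw [← hcount c A hA]
    congr 1
    exact filter_congr fun x _ => ⟨fun h => h.2, fun h => ⟨h.2 ▸ hp, h⟩⟩
  · exact card_eq_zero.2 (filter_eq_empty_iff.2 fun x _ hx => hp (hx.2.2 ▸ hx.1))

section Chunks

variable [DecidableEq X] {chunk : ℕ → Finset X}

theorem card_filter_cumT (hdisj : Pairwise (Disjoint on chunk)) (q : X → Prop)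
    [DecidablePred q] {m : ℕ} (hm : ∀ l, 1 ≤ l → ((chunk l).filter q).card = m) (j : ℕ) :
    ((cumT chunk j).filter q).card = j * m := by
  rw [cumT, filter_biUnion,
    card_biUnion fun l _ l' _ hll' => disjoint_filter_filter (hdisj hll'),
    sum_congr rfl fun l hl => hm l (mem_Icc.1 hl).1]
  simp

theorem card_cumT_s10 (hdisj : Pairwise (Disjoint on chunk)) {n : ℕ}
    (hcard : ∀ l, 1 ≤ l → (chunk l).card = n) (j : ℕ) : (cumT chunk j).card = j * n := by
  simpa using card_filter_cumT hdisj (fun _ => True) (by simpa using hcard) j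

theorem gval_cumT_active_eq_hval {C τ n : ℕ} {Sc : Fin C → Finset F} {label : X → Fin C}
    {feats : X → Finset F} {nA : Fin C → Finset F → ℕ}
    (hfeats : ∀ x, feats x ⊆ Sc (label x)) (hdisj : Pairwise (Disjoint on chunk))
    (hcard : ∀ l, 1 ≤ l → (chunk l).card = n)
    (hcount : ∀ l, 1 ≤ l → ∀ c, ∀ A ∈ (Sc c).powerset,
      ((chunk l).filter fun x => label x = c ∧ feats x = A).card = nA c A)
    {j : ℕ} (hj : j ≠ 0) (L : Finset F) (v : F) :
    gval feats (cumT chunk j) (active feats τ L ∅ (cumT chunk j)) v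
      = hval C Sc nA τ n v L := by
  have hcount_active :=
    card_filter_cumT hdisj (fun x => (feats x ∩ L).card < τ ∧ v ∈ feats x)
    (fun l hl => card_filter_feats_eq_sum Sc label feats nA hfeats _ (hcount l hl)
      (fun A => (A ∩ L).card < τ ∧ v ∈ A)) j
  rw [gval, featCount, active, sdiff_empty, filter_filter, hcount_active, card_cumT_s10 hdisj hcard,
    hval, Nat.cast_mul, Nat.cast_mul, mul_div_mul_left _ _ (Nat.cast_ne_zero.2 hj),
    one_div_mul_eq_div]
  push_cast
  simp only [mul_ite, mul_one, mul_zero, and_comm]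

end Chunks

theorem hval_localOn {C τ n : ℕ} {Sc : Fin C → Finset F} (nA : Fin C → Finset F → ℕ)
    (hdisj : ∀ c c', c ≠ c' → Disjoint (Sc c) (Sc c')) (c : Fin C) :
    LocalOn (hval C Sc nA τ n) (Sc c) := by
  intro v hv L L' hL
  unfold hval
  congr 1
  refine sum_congr rfl fun c' _ => sum_congr rfl fun A hA => ?_
  refine congrArg _ (if_congr (and_congr_right fun hvA => ?_) rfl rfl)
  obtain rfl : c' = c := by
    by_contra hne
    exact disjoint_left.1 (hdisj c' c hne) (mem_powerset.1 hA hvA) hv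
  have hAc : A = A ∩ Sc c' := (inter_eq_left.2 (mem_powerset.1 hA)).symm
  rw [hAc, inter_assoc, inter_comm (Sc c'), hL, inter_comm L', ← inter_assoc, ← hAc]

theorem cold_learned_eq_ideal_general
    {F X : Type} [DecidableEq F] [DecidableEq X]
    (C τ : ℕ) (γ : ℝ) (n : ℕ)
    (Sc : Fin C → Finset F) (label : X → Fin C) (feats : X → Finset F)
    (nA : Fin C → Finset F → ℕ) (chunk : ℕ → Finset X)
    (hγ : 0 < γ)
    (hdisjS : ∀ c c', c ≠ c' → Disjoint (Sc c) (Sc c'))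
    (hfeats : ∀ x, feats x ⊆ Sc (label x))
    (hchunkdisj : ∀ j j', j ≠ j' → Disjoint (chunk j) (chunk j'))
    (hchunkcard : ∀ j, 1 ≤ j → (chunk j).card = n)
    (hcount : ∀ j, 1 ≤ j → ∀ c : Fin C, ∀ A ∈ (Sc c).powerset,
      ((chunk j).filter fun x => label x = c ∧ feats x = A).card = nA c A)
    (hinj : ∀ L : Finset F, L ⊆ Finset.univ.biUnion Sc →
      ∀ c : Fin C, ∀ v₁ ∈ Sc c, ∀ v₂ ∈ Sc c,
        hval C Sc nA τ n v₁ L = hval C Sc nA τ n v₂ L → v₁ = v₂)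
    (usc : ℕ → List F)
    (hcold : ∀ j : ℕ,
      IsRun (Finset.univ.biUnion Sc) feats τ γ (cumT chunk (j + 1)) ∅ ∅ (usc (j + 1)))
    (Li : ℕ → Finset F) (usi : ℕ → List F)
    (hLi0 : Li 0 = ∅)
    (hideal : ∀ j : ℕ,
      IsRun (Finset.univ.biUnion Sc) feats τ γ (cumT chunk (j + 1)) ∅ (Li j)
        (usi (j + 1)) ∧
      Li (j + 1) = Li j ∪ (usi (j + 1)).toFinset)
 :
    (∀ J : ℕ, 1 ≤ J → (usc J).toFinset = Li J) ∧
    (∀ J : ℕ, 2 ≤ J →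
      ACC C Sc nA τ n ((usc J).toFinset) = ACC C Sc nA τ n (Li J)) := by
  have hdisj : Pairwise (Disjoint on chunk) := fun j j' => hchunkdisj j j'
  have hrun (j : ℕ) {L : Finset F} {us : List F}
      (hr : IsRun (univ.biUnion Sc) feats τ γ (cumT chunk (j + 1)) ∅ L us) :
      GreedyRun (univ.biUnion Sc) (hval C Sc nA τ n) (γ / ((j + 1) * n : ℕ)) L us := by
    rw [← card_cumT_s10 hdisj hchunkcard]
    exact hr.greedyRun
      (gval_cumT_active_eq_hval hfeats hdisj hchunkcard hcount j.succ_ne_zero)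
  have hθ (j : ℕ) : γ / ((j + 2) * n : ℕ) ≤ γ / ((j + 1) * n : ℕ) := by
    rcases n.eq_zero_or_pos with rfl | hn
    · simp
    · gcongr; omega
  have hloc := hval_localOn (τ := τ) (n := n) nA hdisjS
  have hinjOn (c : Fin C) (L : Finset F) (hL : L ⊆ Sc c) :
      Set.InjOn (hval C Sc nA τ n · L) (Sc c) :=
    fun _ h₁ _ h₂ => hinj L (hL.trans (subset_biUnion_of_mem Sc (mem_univ c))) c _ h₁ _ h₂
  have hlearned (j : ℕ) : (usc (j + 1)).toFinset = Li (j + 1) := by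
    induction j with
    | zero =>
      rw [(hideal 0).2, hLi0, empty_union]
      exact (hrun 0 (hcold 0)).toFinset_eq hloc hinjOn (hLi0 ▸ hrun 0 (hideal 0).1)
    | succ j ih =>
      rw [(hideal (j + 1)).2, ← ih]
      refine (hrun j (hcold j)).toFinset_eq_union hloc hinjOn (hθ j) ?_
        (hrun (j + 1) (hcold (j + 1)))
      rw [empty_union, ih]
      exact hrun (j + 1) (hideal (j + 1)).1
  have hcold_eq (J : ℕ) (hJ : 1 ≤ J) : (usc J).toFinset = Li J := by
    obtain ⟨j, rfl⟩ := Nat.exists_eq_add_of_le' hJ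
    exact hlearned j
  exact ⟨hcold_eq, fun J hJ => by rw [hcold_eq J (by omega)]⟩

/-- Theorem 3.5, accuracy part: for every `J ≥ 1` the
learned feature set of the cold-started model equals that of the ideal model,
`L_cold^(J) = L_ideal^(J)`; in particular for every `J ≥ 2`,
`ACC(L_cold^(J)) = ACC(L_ideal^(J))`. -/
theorem cold_learned_eq_ideal
    {F X : Type} [DecidableEq F] [DecidableEq X]
    (C K τ : ℕ) (γ : ℝ) (n : ℕ)
    (Sc : Fin C → Finset F) (label : X → Fin C) (feats : X → Finset F)
    (nA : Fin C → Finset F → ℕ) (chunk : ℕ → Finset X)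
    (hγ : 0 < γ) (hτK : τ < K)
    (hK : ∀ c, (Sc c).card = K)
    (hdisjS : ∀ c c', c ≠ c' → Disjoint (Sc c) (Sc c'))
    (hfeats : ∀ x, feats x ⊆ Sc (label x))
    (hnA : ∀ c, ∀ A ∈ (Sc c).powerset, 1 ≤ nA c A)
    (hn : n = ∑ c : Fin C, ∑ A ∈ (Sc c).powerset, nA c A)
    (hchunkdisj : ∀ j j', j ≠ j' → Disjoint (chunk j) (chunk j'))
    (hchunkcard : ∀ j, 1 ≤ j → (chunk j).card = n)
    (hcount : ∀ j, 1 ≤ j → ∀ c : Fin C, ∀ A ∈ (Sc c).powerset,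
      ((chunk j).filter fun x => label x = c ∧ feats x = A).card = nA c A)
    (hC : 0 < C) (hτpos : 0 < τ)
    (hinj : ∀ L : Finset F, L ⊆ Finset.univ.biUnion Sc →
      ∀ c : Fin C, ∀ v₁ ∈ Sc c, ∀ v₂ ∈ Sc c,
        hval C Sc nA τ n v₁ L = hval C Sc nA τ n v₂ L → v₁ = v₂)
    (hii : ∀ c : Fin C, ∃ v : Fin τ → F, Function.Injective v ∧ (∀ i, v i ∈ Sc c) ∧
      ∀ j, 1 ≤ j →
        ((∀ i : Fin τ, (i : ℕ) + 1 < τ →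
            γ / (n : ℝ) ≤ gval feats (chunk j) (chunk j) (v i)) ∧
          gval feats (chunk j) (chunk j)
            (v ⟨τ - 1, Nat.sub_lt hτpos Nat.one_pos⟩) < γ / (n : ℝ)))
    (usc : ℕ → List F)
    (hcold : ∀ j : ℕ,
      IsRun (Finset.univ.biUnion Sc) feats τ γ (cumT chunk (j + 1)) ∅ ∅ (usc (j + 1)))
    (Li : ℕ → Finset F) (usi : ℕ → List F)
    (hLi0 : Li 0 = ∅)
    (hideal : ∀ j : ℕ,
      IsRun (Finset.univ.biUnion Sc) feats τ γ (cumT chunk (j + 1)) ∅ (Li j)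
        (usi (j + 1)) ∧
      Li (j + 1) = Li j ∪ (usi (j + 1)).toFinset)
 :
    (∀ J : ℕ, 1 ≤ J → (usc J).toFinset = Li J) ∧
    (∀ J : ℕ, 2 ≤ J →
      ACC C Sc nA τ n ((usc J).toFinset) = ACC C Sc nA τ n (Li J)) :=
  cold_learned_eq_ideal_general C τ γ n Sc label feats nA chunk hγ hdisjS hfeats hchunkdisj
    hchunkcard hcount hinj usc hcold Li usi hLi0 hideal
end
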